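/- Let Î(t) = ∏_{i=1}^n (1 - c_i exp(-t/τ_i))^{p_i} and Ĵ(t) = ∏_{i=1}^n (1 - d_i exp(-t/τ_i))^{p_i}, with τ_i > 0 pairwise distinct, p_i ≥ 1, and c_i, d_i real. If Î(t) = Ĵ(t) for all t ≥ 0, then c_i = d_i for all i. -/

import Mathlib

/-!
Taking logarithms, for large `t` the hypothesis becomes
`∑ pᵢ (log (1 - cᵢ e^{-t/τᵢ}) - log (1 - dᵢ e^{-t/τᵢ})) = 0`.
Since `log (1 - c u) ~ -c u` as `u → 0`, multiplying by `e^{t/τₘ}` for the largest `τₘ` kills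
every other term and leaves `pₘ (dₘ - cₘ)` in the limit, so `cₘ = dₘ`; the `m`-th term then
vanishes identically and we induct on the remaining indices.
-/

open Real Filter Topology Finset

lemma tendsto_log_one_sub_mul_div (c : ℝ) :
    Tendsto (fun u : ℝ => log (1 - c * u) / u) (𝓝[≠] 0) (𝓝 (-c)) := by
  have hderiv : HasDerivAt (fun u : ℝ => log (1 - c * u)) (-c) 0 := by
    have hlin : HasDerivAt (fun u : ℝ => 1 - c * u) (-c) 0 := by
      simpa using ((hasDerivAt_id (0 : ℝ)).const_mul c).const_sub (1 : ℝ)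
    simpa using hlin.log (by simp)
  simpa [slope_fun_def_field] using hasDerivAt_iff_tendsto_slope.mp hderiv

lemma tendsto_exp_neg_div_nhdsNE {b : ℝ} (hb : 0 < b) :
    Tendsto (fun t : ℝ => exp (-t / b)) atTop (𝓝[≠] 0) := by
  refine tendsto_nhdsWithin_of_tendsto_nhds_of_eventually_within _ ?_
    (Eventually.of_forall fun t => (exp_pos _).ne')
  refine tendsto_exp_atBot.comp ?_
  exact (tendsto_neg_atTop_atBot.comp (tendsto_id.atTop_div_const hb)).congr fun t => by
    simp [neg_div]

lemma eventually_one_sub_mul_exp_neg_div_pos {b : ℝ} (hb : 0 < b) (c : ℝ) :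
    ∀ᶠ t in atTop, 0 < 1 - c * exp (-t / b) := by
  have hsmall : Tendsto (fun t => c * exp (-t / b)) atTop (𝓝 0) := by
    simpa using ((tendsto_exp_neg_div_nhdsNE hb).mono_right nhdsWithin_le_nhds).const_mul c
  filter_upwards [hsmall.eventually_lt_const one_pos] with t ht
  linarith

lemma tendsto_exp_div_mul_log_one_sub_mul_exp {b : ℝ} (hb : 0 < b) (c : ℝ) :
    Tendsto (fun t : ℝ => exp (t / b) * log (1 - c * exp (-t / b))) atTop (𝓝 (-c)) := by
  refine ((tendsto_log_one_sub_mul_div c).comp (tendsto_exp_neg_div_nhdsNE hb)).congr fun t => ?_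
  simp [exp_neg, div_eq_mul_inv, mul_comm]

lemma tendsto_exp_div_mul_log_one_sub_mul_exp_of_lt {a b : ℝ} (hb : 0 < b) (hba : b < a)
    (c : ℝ) :
    Tendsto (fun t : ℝ => exp (t / a) * log (1 - c * exp (-t / b))) atTop (𝓝 0) := by
  have hrate : 1 / a - 1 / b < 0 := sub_neg.mpr (one_div_lt_one_div_of_lt hb hba)
  have hgap : Tendsto (fun t : ℝ => exp (t / a - t / b)) atTop (𝓝 0) := by
    refine tendsto_exp_atBot.comp ((tendsto_id.atTop_mul_const_of_neg hrate).congr fun t => ?_)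
    simp only [id_eq]
    ring
  simpa [← mul_assoc, ← exp_add] using hgap.mul (tendsto_exp_div_mul_log_one_sub_mul_exp hb c)

/-- `log ((1 - c e^{-t/b}) / (1 - d e^{-t/b}))` when both factors are positive. -/
noncomputable def logRatio (c d b t : ℝ) : ℝ :=
  log (1 - c * exp (-t / b)) - log (1 - d * exp (-t / b))

lemma tendsto_exp_div_mul_logRatio {b : ℝ} (hb : 0 < b) (c d : ℝ) :
    Tendsto (fun t => exp (t / b) * logRatio c d b t) atTop (𝓝 (d - c)) := by
  have hlim := (tendsto_exp_div_mul_log_one_sub_mul_exp hb c).sub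
    (tendsto_exp_div_mul_log_one_sub_mul_exp hb d)
  rw [neg_sub_neg] at hlim
  exact hlim.congr fun t => by rw [logRatio, mul_sub]

lemma tendsto_exp_div_mul_logRatio_of_lt {a b : ℝ} (hb : 0 < b) (hba : b < a) (c d : ℝ) :
    Tendsto (fun t => exp (t / a) * logRatio c d b t) atTop (𝓝 0) := by
  simpa [logRatio, mul_sub] using
    (tendsto_exp_div_mul_log_one_sub_mul_exp_of_lt hb hba c).sub
      (tendsto_exp_div_mul_log_one_sub_mul_exp_of_lt hb hba d)

section LogRatioSum

variable {ι : Type*} {w c d τ : ι → ℝ}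

lemma tendsto_exp_div_mul_sum_logRatio_of_lt {s : Finset ι} {a : ℝ}
    (hτ : ∀ j ∈ s, 0 < τ j ∧ τ j < a) :
    Tendsto (fun t => exp (t / a) * ∑ j ∈ s, w j * logRatio (c j) (d j) (τ j) t) atTop (𝓝 0) := by
  simp_rw [Finset.mul_sum, mul_left_comm (exp _)]
  simpa using tendsto_finsetSum s fun j hj =>
    (tendsto_exp_div_mul_logRatio_of_lt (hτ j hj).1 (hτ j hj).2 (c j) (d j)).const_mul (w j)

theorem eq_of_sum_logRatio_eventually_eq_zero (S : Finset ι) (hτ : ∀ i ∈ S, 0 < τ i)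
    (hinj : Set.InjOn τ S) (hw : ∀ i ∈ S, w i ≠ 0)
    (hsum : ∀ᶠ t in atTop, ∑ i ∈ S, w i * logRatio (c i) (d i) (τ i) t = 0) :
    ∀ i ∈ S, c i = d i := by
  classical
  induction S using Finset.induction_on_max_value τ with
  | empty => simp
  | insert m s hm hmax ih =>
    simp only [coe_insert, Set.injOn_insert (mem_coe.not.mpr hm), Set.mem_image, mem_coe,
      forall_mem_insert] at hτ hinj hw ⊢
    have hlt : ∀ j ∈ s, 0 < τ j ∧ τ j < τ m := fun j hj =>
      ⟨hτ.2 j hj, (hmax j hj).lt_of_ne fun h => hinj.2 ⟨j, hj, h⟩⟩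
    have hlim := ((tendsto_exp_div_mul_logRatio hτ.1 (c m) (d m)).const_mul (w m)).add
      (tendsto_exp_div_mul_sum_logRatio_of_lt (w := w) (c := c) (d := d) hlt)
    have hzero : Tendsto (fun t => exp (t / τ m) *
        ∑ i ∈ insert m s, w i * logRatio (c i) (d i) (τ i) t) atTop (𝓝 0) :=
      tendsto_const_nhds.congr' (by filter_upwards [hsum] with t ht; rw [ht, mul_zero])
    simp only [sum_insert hm, mul_add, ← mul_left_comm (w m)] at hzero
    have hcm : c m = d m := by
      have := tendsto_nhds_unique hlim hzero
      simp only [add_zero, mul_eq_zero, hw.1, false_or, sub_eq_zero] at this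
      exact this.symm
    refine ⟨hcm, ih hτ.2 hinj.1 hw.2 ?_⟩
    filter_upwards [hsum] with t ht
    simpa [sum_insert hm, hcm, logRatio] using ht

end LogRatioSum

theorem normalized_trace_identifiability (n : ℕ) (c d : Fin n → ℝ)
    (τ : Fin n → ℝ) (hτ : ∀ i, 0 < τ i)
    (hdist : ∀ i j, i ≠ j → τ i ≠ τ j) (p : Fin n → ℕ) (hp : ∀ i, 1 ≤ p i)
    (heq : ∀ t : ℝ, 0 ≤ t →
      ∏ i, (1 - c i * Real.exp (-t / τ i)) ^ (p i) =
      ∏ i, (1 - d i * Real.exp (-t / τ i)) ^ (p i)) :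
    ∀ i, c i = d i := by
  have hpos : ∀ᶠ t in atTop, ∀ i, 0 < 1 - c i * exp (-t / τ i) ∧ 0 < 1 - d i * exp (-t / τ i) :=
    eventually_all.2 fun i => (eventually_one_sub_mul_exp_neg_div_pos (hτ i) (c i)).and
      (eventually_one_sub_mul_exp_neg_div_pos (hτ i) (d i))
  have hsum : ∀ᶠ t in atTop, ∑ i, (p i : ℝ) * logRatio (c i) (d i) (τ i) t = 0 := by
    filter_upwards [hpos, eventually_ge_atTop 0] with t hpos ht
    have hlog := congrArg log (heq t ht)
    rw [log_prod fun i _ => pow_ne_zero _ (hpos i).1.ne',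
      log_prod fun i _ => pow_ne_zero _ (hpos i).2.ne'] at hlog
    simp only [log_pow] at hlog
    simp only [logRatio, mul_sub, sum_sub_distrib, hlog, sub_self]
  intro i
  exact eq_of_sum_logRatio_eventually_eq_zero univ (fun i _ => hτ i)
    (fun i _ j _ h => by_contra fun hij => hdist i j hij h)
    (fun i _ => by have := hp i; positivity) hsum i (mem_univ i)
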